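/- arXiv:2411.18244 — 6 statements merged into one kernel-verified Lean document; each statement's English description precedes it below -/
import Mathlib

section
/- Let n ≥ 3 be a natural number that is not prime (so the set V₂ of elements of ZMod n that are neither the additive identity 0 nor additive generators is nonempty), let l = φ(n) + 1, and let d_avg = (∑_{v ∈ V₂} deg(v)) / (n − l) be the average degree in the power graph P(C_n) of the elements of V₂. Then the spectral radius satisfies λ₁(P(C_n)) ≥ ((d_avg − 1) + √((d_avg + 1 − 2l)² + 4l(n − l))) / 2. -/
open scoped Classical

noncomputable section

/-- The power graph of an additive group: distinct `x, y` are adjacent iff one is a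
natural-number multiple (additive power) of the other. -/
def addPowerGraph (G : Type*) [AddGroup G] : SimpleGraph G where
  Adj x y := x ≠ y ∧ ∃ m : ℕ, x = m • y ∨ y = m • x
  symm := by
    constructor
    rintro x y ⟨hxy, m, hm⟩
    exact ⟨hxy.symm, m, hm.symm⟩
  loopless := by
    constructor
    rintro x ⟨hx, -⟩
    exact hx rfl

/-!
The identity and the `φ n` generators of `ZMod n` form a set `D` of `l = φ n + 1` vertices
adjacent to every other vertex of the power graph. For the partition `D ⊔ Dᶜ` of any graph with
such a dominating set, the quotient matrix of block row averages is `[[l - 1, n - l], [l, d - l]]`,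
with `d` the average degree on `Dᶜ`. Its larger eigenvalue is the stated bound, and its
eigenvector, lifted to a vector constant on both parts, has that eigenvalue as Rayleigh quotient
for the adjacency matrix, which is at most `λ₁`.
-/

open Finset Matrix

section Rayleigh

variable {V : Type*} [Fintype V] [DecidableEq V]

theorem Matrix.IsHermitian.dotProduct_mulVec_le {A : Matrix V V ℝ} (hA : A.IsHermitian) {lam : ℝ}
    (hlam : lam ∈ upperBounds (spectrum ℝ A)) (x : V → ℝ) :
    x ⬝ᵥ A *ᵥ x ≤ lam * (x ⬝ᵥ x) := by
  set M := algebraMap ℝ (Matrix V V ℝ) lam - A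
  have hM : M.IsHermitian := by
    simp only [M, algebraMap_eq_diagonal]
    exact (isHermitian_diagonal _).sub hA
  have hMpsd : M.PosSemidef := by
    refine hM.posSemidef_iff_eigenvalues_nonneg.mpr fun i => ?_
    obtain ⟨_, rfl, s, hs, hi⟩ := Set.mem_sub.mp
      ((spectrum.singleton_sub_eq A lam).symm ▸ hM.eigenvalues_mem_spectrum_real i)
    simp only [Pi.zero_apply]
    linarith [hlam hs]
  have := hMpsd.dotProduct_mulVec_nonneg x
  rw [star_trivial, sub_mulVec, dotProduct_sub, Algebra.algebraMap_eq_smul_one, smul_mulVec,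
    one_mulVec, dotProduct_smul, smul_eq_mul] at this
  linarith

end Rayleigh

section TwoBlock

variable {V : Type*} [Fintype V] [DecidableEq V]

theorem Finset.sum_mul_ite_mem {R : Type*} [CommSemiring R] (S : Finset V) (p q : R)
    (f : V → R) :
    ∑ v, f v * (if v ∈ S then p else q) = (∑ v ∈ S, f v) * p + (∑ v ∈ Sᶜ, f v) * q := by
  rw [← sum_add_sum_compl S, sum_mul, sum_mul]
  congr 1 <;> refine sum_congr rfl fun v hv => ?_
  · rw [if_pos hv]
  · rw [if_neg (mem_compl.mp hv)]

def Matrix.blockSum {R : Type*} [AddCommMonoid R] (A : Matrix V V R) (S T : Finset V) : R :=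
  ∑ u ∈ S, ∑ v ∈ T, A u v

theorem Matrix.dotProduct_mulVec_ite_mem {R : Type*} [CommSemiring R] (A : Matrix V V R)
    (S : Finset V) (p q : R) :
    let x : V → R := fun v => if v ∈ S then p else q
    x ⬝ᵥ A *ᵥ x = (A.blockSum S S * p + A.blockSum S Sᶜ * q) * p
      + (A.blockSum Sᶜ S * p + A.blockSum Sᶜ Sᶜ * q) * q := by
  intro x
  have hAx : ∀ u, (A *ᵥ x) u = (∑ v ∈ S, A u v) * p + (∑ v ∈ Sᶜ, A u v) * q :=
    fun u => sum_mul_ite_mem S p q (A u)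
  rw [dotProduct_comm, dotProduct, sum_mul_ite_mem]
  simp only [hAx, sum_add_distrib, ← sum_mul, blockSum]

/-- `hS` and `hSc` say that `(p, q)` is a `μ`-eigenvector of the quotient matrix
`(A.blockSum Sᵢ Sⱼ / #Sᵢ)` of the partition `S ⊔ Sᶜ`; its lift to `V`, constant on both parts,
has Rayleigh quotient `μ`. -/
theorem Matrix.IsHermitian.le_of_quotient_eigen {A : Matrix V V ℝ} (hA : A.IsHermitian)
    {lam : ℝ} (hlam : lam ∈ upperBounds (spectrum ℝ A)) (S : Finset V) {p q μ : ℝ}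
    (hS : A.blockSum S S * p + A.blockSum S Sᶜ * q = μ * (#S * p))
    (hSc : A.blockSum Sᶜ S * p + A.blockSum Sᶜ Sᶜ * q = μ * (#Sᶜ * q))
    (hpos : 0 < #S * p ^ 2 + #Sᶜ * q ^ 2) :
    μ ≤ lam := by
  set x : V → ℝ := fun v => if v ∈ S then p else q
  have hxx : x ⬝ᵥ x = #S * p ^ 2 + #Sᶜ * q ^ 2 := by
    rw [dotProduct, sum_mul_ite_mem, sum_congr rfl fun v hv => if_pos hv,
      sum_congr rfl fun v hv => if_neg (mem_compl.mp hv), sum_const, sum_const,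
      nsmul_eq_mul, nsmul_eq_mul]
    ring
  have hxAx : x ⬝ᵥ A *ᵥ x = μ * (x ⬝ᵥ x) := by
    rw [dotProduct_mulVec_ite_mem, hS, hSc, hxx]
    ring
  have := hA.dotProduct_mulVec_le hlam x
  rw [hxAx] at this
  exact le_of_mul_le_mul_right this (hxx ▸ hpos)

end TwoBlock

namespace SimpleGraph

variable {V R : Type*} {G : SimpleGraph V} [DecidableRel G.Adj]

section AddCommMonoidWithOne

variable [AddCommMonoidWithOne R]

theorem sum_adjMatrix_apply (u : V) (T : Finset V) :
    ∑ v ∈ T, G.adjMatrix R u v = #{v ∈ T | G.Adj u v} := by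
  simp only [adjMatrix_apply, sum_boole]

theorem sum_adjMatrix_apply_univ [Fintype V] (u : V) :
    ∑ v, G.adjMatrix R u v = G.degree u := by
  rw [sum_adjMatrix_apply, ← neighborFinset_eq_filter, card_neighborFinset_eq_degree]

theorem sum_adjMatrix_apply_of_forall_adj [DecidableEq V] {u : V}
    (hu : ∀ v, u ≠ v → G.Adj u v) (T : Finset V) :
    ∑ v ∈ T, G.adjMatrix R u v = #(T.erase u) := by
  rw [sum_adjMatrix_apply]
  congr 2
  ext v
  simp only [mem_filter, mem_erase]
  exact ⟨fun ⟨hv, huv⟩ => ⟨huv.ne', hv⟩, fun ⟨hvu, hv⟩ => ⟨hv, hu v (Ne.symm hvu)⟩⟩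

end AddCommMonoidWithOne

variable [DecidableEq V] [Ring R] {D : Finset V}

theorem blockSum_adjMatrix_self_of_dominating (hD : ∀ u ∈ D, ∀ v, u ≠ v → G.Adj u v) :
    (G.adjMatrix R).blockSum D D = #D * (#D - 1) := by
  rw [blockSum, sum_congr rfl fun u hu => sum_adjMatrix_apply_of_forall_adj (hD u hu) D,
    sum_congr rfl fun u hu => by rw [card_erase_of_mem hu, Nat.cast_pred (card_pos.mpr ⟨u, hu⟩)],
    sum_const, nsmul_eq_mul]

variable [Fintype V]

theorem sum_adjMatrix_apply_of_dominating (hD : ∀ u ∈ D, ∀ v, u ≠ v → G.Adj u v) {u : V}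
    (hu : u ∈ Dᶜ) : ∑ v ∈ D, G.adjMatrix R u v = #D := by
  rw [sum_adjMatrix_apply, filter_true_of_mem]
  intro v hv
  exact (hD v hv u fun h => mem_compl.mp hu (h ▸ hv)).symm

theorem blockSum_adjMatrix_compl_of_dominating (hD : ∀ u ∈ D, ∀ v, u ≠ v → G.Adj u v) :
    (G.adjMatrix R).blockSum D Dᶜ = #D * #Dᶜ := by
  rw [blockSum, sum_congr rfl fun u hu => sum_adjMatrix_apply_of_forall_adj (hD u hu) Dᶜ,
    sum_congr rfl fun u hu => by rw [erase_eq_of_notMem (notMem_compl.mpr hu)],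
    sum_const, nsmul_eq_mul]

theorem blockSum_adjMatrix_compl_left_of_dominating (hD : ∀ u ∈ D, ∀ v, u ≠ v → G.Adj u v) :
    (G.adjMatrix R).blockSum Dᶜ D = #Dᶜ * #D := by
  rw [blockSum, sum_congr rfl fun u hu => sum_adjMatrix_apply_of_dominating hD hu, sum_const,
    nsmul_eq_mul]

theorem blockSum_adjMatrix_compl_compl_of_dominating (hD : ∀ u ∈ D, ∀ v, u ≠ v → G.Adj u v) :
    (G.adjMatrix R).blockSum Dᶜ Dᶜ = ∑ u ∈ Dᶜ, (G.degree u : R) - #Dᶜ * #D := by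
  have hrow : ∀ u ∈ Dᶜ, ∑ v ∈ Dᶜ, G.adjMatrix R u v = G.degree u - #D := fun u hu => by
    rw [← sum_adjMatrix_apply_univ, ← sum_add_sum_compl D, sum_adjMatrix_apply_of_dominating hD hu,
      add_sub_cancel_left]
  rw [blockSum, sum_congr rfl hrow, sum_sub_distrib, sum_const, nsmul_eq_mul]

theorem le_of_mem_upperBounds_spectrum_of_dominating {lam : ℝ}
    (hlam : lam ∈ upperBounds (spectrum ℝ (G.adjMatrix ℝ)))
    (hD : ∀ u ∈ D, ∀ v, u ≠ v → G.Adj u v) (hD₀ : D.Nonempty) (hDc₀ : Dᶜ.Nonempty) {d : ℝ}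
    (hd : ∑ u ∈ Dᶜ, (G.degree u : ℝ) = d * #Dᶜ) :
    ((d - 1) + √((d + 1 - 2 * #D) ^ 2 + 4 * #D * #Dᶜ)) / 2 ≤ lam := by
  set l := (#D : ℝ)
  set m := (#Dᶜ : ℝ)
  set μ := ((d - 1) + √((d + 1 - 2 * l) ^ 2 + 4 * l * m)) / 2
  have hroot : μ ^ 2 - (d - 1) * μ + (l - 1) * (d - l) - l * m = 0 := by
    have := Real.sq_sqrt (show 0 ≤ (d + 1 - 2 * l) ^ 2 + 4 * l * m by positivity)
    linear_combination this / 4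
  -- `(m, μ - l + 1)` is a `μ`-eigenvector of the quotient matrix `[[l - 1, m], [l, d - l]]`,
  -- whose characteristic polynomial is the one in `hroot`.
  refine (isHermitian_iff_isSymm.mpr G.isSymm_adjMatrix).le_of_quotient_eigen hlam D
    (p := m) (q := μ - l + 1) ?_ ?_ ?_
  · rw [blockSum_adjMatrix_self_of_dominating hD, blockSum_adjMatrix_compl_of_dominating hD]
    ring
  · rw [blockSum_adjMatrix_compl_left_of_dominating hD,
      blockSum_adjMatrix_compl_compl_of_dominating hD, hd]
    linear_combination (-m) * hroot
  · have : 0 < l := by simp [l, hD₀.card_pos]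
    have : 0 < m := by simp [m, hDc₀.card_pos]
    positivity

end SimpleGraph

section PowerGraph

variable {G : Type*} [AddGroup G]

theorem addPowerGraph_adj_of_eq_zero_or_addOrderOf_eq_card [Finite G] {u v : G}
    (hu : u = 0 ∨ addOrderOf u = Nat.card G) (huv : u ≠ v) : (addPowerGraph G).Adj u v := by
  refine ⟨huv, ?_⟩
  rcases hu with rfl | hu
  · exact ⟨0, Or.inl (zero_nsmul v).symm⟩
  have htop : AddSubgroup.zmultiples u = ⊤ :=
    AddSubgroup.eq_top_of_card_eq _ (by rw [Nat.card_zmultiples, hu])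
  obtain ⟨m, hm⟩ := (AddSubmonoid.mem_multiples_iff v u).mp
    (mem_multiples_iff_mem_zmultiples.mpr (htop ▸ AddSubgroup.mem_top v))
  exact ⟨m, Or.inr hm.symm⟩

theorem card_filter_eq_zero_or_addOrderOf_eq_card [Fintype G] [DecidableEq G] [IsAddCyclic G]
    (hG : 1 < Fintype.card G) :
    #{v : G | v = 0 ∨ addOrderOf v = Fintype.card G} = (Fintype.card G).totient + 1 := by
  have hzero : #{v : G | v = 0} = 1 := card_eq_one.mpr ⟨0, by ext; simp⟩
  rw [filter_or, card_union_of_disjoint, hzero, IsAddCyclic.card_addOrderOf_eq_totient dvd_rfl,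
    add_comm]
  rw [disjoint_filter]
  rintro v - rfl
  rw [addOrderOf_zero]
  exact hG.ne

end PowerGraph

theorem Nat.totient_add_two_le {n : ℕ} (hn : 1 < n) (hnp : ¬ n.Prime) : n.totient + 2 ≤ n := by
  have hlt := Nat.totient_lt n hn
  have hne : n.totient ≠ n - 1 := fun h => hnp ((Nat.totient_eq_iff_prime (by omega)).mp h)
  omega

/-- Spectral-radius lower bound for the power graph of the cyclic group `ZMod n`. -/
theorem spectralRadius_powerGraph_cyclic_lower_bound
    (n : ℕ) [NeZero n] (hn : 3 ≤ n) (hnp : ¬ n.Prime) (lam l davg : ℝ)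
    (hlam : IsGreatest (spectrum ℝ ((addPowerGraph (ZMod n)).adjMatrix ℝ)) lam)
    (hl : l = (Nat.totient n : ℝ) + 1)
    (hdavg : davg =
      (∑ v ∈ Finset.univ.filter (fun v : ZMod n => v ≠ 0 ∧ addOrderOf v ≠ n),
        ((addPowerGraph (ZMod n)).degree v : ℝ)) / ((n : ℝ) - l)) :
    ((davg - 1) + Real.sqrt ((davg + 1 - 2 * l) ^ 2 + 4 * l * ((n : ℝ) - l))) / 2 ≤ lam := by
  set S := univ.filter fun v : ZMod n => v ≠ 0 ∧ addOrderOf v ≠ n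
  set D := univ.filter fun v : ZMod n => v = 0 ∨ addOrderOf v = n
  have hDc : Dᶜ = S := by
    ext v
    simp only [D, S, compl_filter, mem_filter, not_or]
  have hcardD : #D = n.totient + 1 := by
    simpa only [ZMod.card] using
      card_filter_eq_zero_or_addOrderOf_eq_card (G := ZMod n) (by rw [ZMod.card]; omega)
  have hcard : #S + #D = n := by rw [← hDc, card_compl_add_card, ZMod.card]
  have hS : S.Nonempty := card_pos.mp (by have := Nat.totient_add_two_le (by omega) hnp; omega)
  have hl' : (#D : ℝ) = l := by rw [hcardD, hl]; push_cast; rfl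
  have hnl : (#S : ℝ) = n - l := by
    rw [← hl']
    exact eq_sub_of_add_eq (by exact_mod_cast hcard)
  have hdeg : ∑ u ∈ S, ((addPowerGraph (ZMod n)).degree u : ℝ) = davg * #S := by
    rw [hdavg, hnl, div_mul_cancel₀ _ (hnl ▸ Nat.cast_ne_zero.mpr hS.card_pos.ne')]
  have hdom : ∀ u ∈ D, ∀ v, u ≠ v → (addPowerGraph (ZMod n)).Adj u v := fun u hu _ =>
    addPowerGraph_adj_of_eq_zero_or_addOrderOf_eq_card (by simpa [D] using hu)
  have := SimpleGraph.le_of_mem_upperBounds_spectrum_of_dominating hlam.2 hdom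
    ⟨0, by simp [D]⟩ (hDc ▸ hS) (hDc ▸ hdeg)
  rwa [hDc, hl', hnl] at this
end
end

section
/- Let p be a prime and m ≥ 2 a natural number, and set n = p^m, l = φ(n) + 1. Let V₂ be the (nonempty) set of elements of ZMod n that are neither 0 nor additive generators, and let d_avg = (∑_{v ∈ V₂} deg(v)) / (n − l). Then equality holds in the spectral-radius bound: λ₁(P(C_n)) = ((d_avg − 1) + √((d_avg + 1 − 2l)² + 4l(n − l))) / 2, and both sides equal n − 1. -/
/-!
The subgroups of a cyclic group of order `p ^ m` form a chain, so of any two elements one is a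
multiple of the other and the power graph of `C_{p^m}` is complete. A `d`-regular graph has
spectral radius `d` (the all-ones vector is an eigenvector, and Gershgorin bounds every
eigenvalue by the row sums), so `λ₁ = n - 1`; every degree is `n - 1` as well, hence
`d_avg = n - 1`, and then the discriminant equals `n²`.
-/

open scoped Classical

noncomputable section

open Finset Subgroup SimpleGraph

@[to_additive]
theorem mem_zpowers_of_orderOf_dvd {G : Type*} [Group G] [Finite G] [IsCyclic G] {x y : G}
    (h : orderOf x ∣ orderOf y) : x ∈ zpowers y := by
  have := Fintype.ofFinite G
  set S : Finset G := {z | z ^ orderOf y = 1}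
  have hsub : (zpowers y : Set G).toFinset ⊆ S := by
    rintro _ hz
    obtain ⟨k, rfl⟩ := mem_zpowers_iff.mp (Set.mem_toFinset.mp hz)
    simp only [S, mem_filter, mem_univ, true_and]
    rw [← zpow_natCast, ← zpow_mul, mul_comm, zpow_mul, zpow_natCast, pow_orderOf_eq_one,
      one_zpow]
  -- a cyclic group has at most `orderOf y` solutions of `z ^ orderOf y = 1`
  have hle : #S ≤ #(zpowers y : Set G).toFinset := by
    rw [Set.toFinset_card, Fintype.card_eq_nat_card, SetLike.coe_sort_coe, Nat.card_zpowers]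
    exact IsCyclic.card_pow_eq_one_le (orderOf_pos y)
  have hx : x ∈ S := by
    simpa [S, orderOf_dvd_iff_pow_eq_one] using h
  rw [← Finset.eq_of_subset_of_card_le hsub hle] at hx
  simpa using hx

theorem exists_nsmul_eq_of_addOrderOf_dvd {G : Type*} [AddGroup G] [Finite G] [IsAddCyclic G]
    {x y : G} (h : addOrderOf x ∣ addOrderOf y) : ∃ k : ℕ, k • y = x :=
  (AddSubmonoid.mem_multiples_iff _ _).mp <|
    (isOfFinAddOrder_of_finite y).mem_multiples_iff_mem_zmultiples.mpr <|
      mem_zmultiples_of_addOrderOf_dvd h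

theorem addPowerGraph_eq_top_of_card_eq_prime_pow {G : Type*} [AddGroup G] [Finite G]
    [IsAddCyclic G] {p m : ℕ} (hp : p.Prime) (hG : Nat.card G = p ^ m) :
    addPowerGraph G = ⊤ := by
  ext x y
  refine ⟨fun h => h.1, fun hxy => ⟨hxy, ?_⟩⟩
  obtain ⟨i, -, hi⟩ := (Nat.dvd_prime_pow hp).mp (hG ▸ addOrderOf_dvd_natCard x)
  obtain ⟨j, -, hj⟩ := (Nat.dvd_prime_pow hp).mp (hG ▸ addOrderOf_dvd_natCard y)
  rcases le_total i j with hij | hji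
  · obtain ⟨k, hk⟩ := exists_nsmul_eq_of_addOrderOf_dvd (x := x) (y := y)
      (hi ▸ hj ▸ Nat.pow_dvd_pow p hij)
    exact ⟨k, Or.inl hk.symm⟩
  · obtain ⟨k, hk⟩ := exists_nsmul_eq_of_addOrderOf_dvd (x := y) (y := x)
      (hi ▸ hj ▸ Nat.pow_dvd_pow p hji)
    exact ⟨k, Or.inr hk.symm⟩

theorem SimpleGraph.IsRegularOfDegree.isGreatest_spectrum_adjMatrix {V : Type*} [Fintype V]
    [DecidableEq V] [Nonempty V] {G : SimpleGraph V} [DecidableRel G.Adj] {d : ℕ}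
    (hG : G.IsRegularOfDegree d) : IsGreatest (spectrum ℝ (G.adjMatrix ℝ)) (d : ℝ) := by
  have hspec (μ : ℝ) : μ ∈ spectrum ℝ (G.adjMatrix ℝ) ↔
      Module.End.HasEigenvalue (Matrix.toLin' (G.adjMatrix ℝ)) μ := by
    rw [← Matrix.spectrum_toLin', Module.End.hasEigenvalue_iff_mem_spectrum]
  constructor
  · rw [hspec]
    refine Module.End.hasEigenvalue_of_hasEigenvector (x := Function.const V 1)
      ⟨Module.End.mem_eigenspace_iff.mpr ?_, Function.const_ne_zero.mpr one_ne_zero⟩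
    ext v
    simpa [Matrix.toLin'_apply] using hG v
  · intro μ hμ
    obtain ⟨k, hk⟩ := eigenvalue_mem_ball ((hspec μ).mp hμ)
    have hrow : ∑ j ∈ univ.erase k, ‖G.adjMatrix ℝ k j‖ = d := by
      rw [Finset.sum_erase _ (by simp), ← hG k]
      simp [apply_ite, sum_boole, degree, neighborFinset_eq_filter]
    rw [hrow, adjMatrix_apply, if_neg (G.loopless.irrefl k), Metric.mem_closedBall,
      Real.dist_eq, sub_zero] at hk
    exact (le_abs_self μ).trans hk

theorem IsAddCyclic.card_nonzero_nongenerators_add_totient {G : Type*} [AddGroup G] [Fintype G]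
    [DecidableEq G] [IsAddCyclic G] (hG : 1 < Fintype.card G) :
    #{v : G | v ≠ 0 ∧ addOrderOf v ≠ Fintype.card G} + (Fintype.card G).totient + 1 =
      Fintype.card G := by
  have hgen : #{v : G | addOrderOf v = Fintype.card G} = (Fintype.card G).totient :=
    IsAddCyclic.card_addOrderOf_eq_totient dvd_rfl
  have hS : ({v : G | v ≠ 0 ∧ addOrderOf v ≠ Fintype.card G} : Finset G) =
      ({v | v = 0 ∨ addOrderOf v = Fintype.card G} : Finset G)ᶜ := by
    ext; simp
  have hT : #({v | v = 0 ∨ addOrderOf v = Fintype.card G} : Finset G) =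
      (Fintype.card G).totient + 1 := by
    rw [filter_or, card_union_of_disjoint, filter_eq', if_pos (mem_univ _), card_singleton, hgen,
      add_comm]
    exact disjoint_filter.mpr fun v _ hv => by rw [hv, addOrderOf_zero]; exact hG.ne
  rw [hS, card_compl, hT, add_assoc, Nat.sub_add_cancel (hT ▸ card_le_univ _)]

theorem Nat.totient_add_one_lt_of_not_prime {n : ℕ} (h1 : 1 < n) (hn : ¬ n.Prime) :
    n.totient + 1 < n := by
  have hlt := Nat.totient_lt n h1
  have hne := (Nat.totient_eq_iff_prime (by omega)).not.mpr hn
  omega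

/-- For `n = p ^ m` a prime power (`m ≥ 2`), equality holds in the spectral-radius
lower bound, and both sides equal `n - 1`. -/
theorem spectralRadius_powerGraph_cyclic_primePower_eq
    (n p m : ℕ) [NeZero n] (hp : p.Prime) (hm : 2 ≤ m) (hn : n = p ^ m)
    (lam l davg : ℝ)
    (hlam : IsGreatest (spectrum ℝ ((addPowerGraph (ZMod n)).adjMatrix ℝ)) lam)
    (hl : l = (Nat.totient n : ℝ) + 1)
    (hdavg : davg =
      (∑ v ∈ Finset.univ.filter (fun v : ZMod n => v ≠ 0 ∧ addOrderOf v ≠ n),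
        ((addPowerGraph (ZMod n)).degree v : ℝ)) / ((n : ℝ) - l)) :
    lam = ((davg - 1) + Real.sqrt ((davg + 1 - 2 * l) ^ 2 + 4 * l * ((n : ℝ) - l))) / 2 ∧
    lam = (n : ℝ) - 1 := by
  have hn1 : 1 < n := hn ▸ Nat.one_lt_pow (by omega) hp.one_lt
  have hreg : (addPowerGraph (ZMod n)).IsRegularOfDegree (n - 1) := by
    rw [addPowerGraph_eq_top_of_card_eq_prime_pow hp (by rw [Nat.card_zmod, hn])]
    convert IsRegularOfDegree.top (V := ZMod n)
    rw [ZMod.card]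
  have hlam_eq : lam = n - 1 := by
    simpa [Nat.cast_sub hn1.le] using hlam.unique hreg.isGreatest_spectrum_adjMatrix
  have hcard : (#{v : ZMod n | v ≠ 0 ∧ addOrderOf v ≠ n} : ℝ) = n - l := by
    have h := IsAddCyclic.card_nonzero_nongenerators_add_totient (G := ZMod n)
      (by rwa [ZMod.card])
    rw [ZMod.card] at h
    rw [hl, eq_sub_iff_add_eq, ← add_assoc]
    exact_mod_cast h
  have hl_lt : l < n := by
    rw [hl]
    exact_mod_cast Nat.totient_add_one_lt_of_not_prime hn1 (hn ▸ Nat.Prime.not_prime_pow hm)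
  have hdavg_eq : davg = n - 1 := by
    rw [hdavg, sum_congr rfl fun v _ => by rw [hreg v], sum_const, nsmul_eq_mul, hcard,
      Nat.cast_sub hn1.le, Nat.cast_one, mul_div_cancel_left₀ _ (sub_ne_zero.mpr hl_lt.ne')]
  have hdisc : (davg + 1 - 2 * l) ^ 2 + 4 * l * (n - l) = (n : ℝ) ^ 2 := by
    rw [hdavg_eq]
    ring
  refine ⟨?_, hlam_eq⟩
  rw [hdisc, Real.sqrt_sq n.cast_nonneg, hlam_eq, hdavg_eq]
  ring
end
end

section
/- Let n ≥ 3 and let D_avg = (∑_{v ∈ ZMod n} deg(v)) / n be the average degree of the power graph P(C_n) of the cyclic group ZMod n. Then the spectral radius of the power graph of the dihedral group of order 2n satisfies λ₁(P(D_{2n})) ≥ (D_avg + √(D_avg² + 4)) / 2. -/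
/-!
Test the adjacency matrix against the vector `x` equal to `t` on rotations and `1` on
reflections, where `t = (D + √(D² + 4)) / 2` is the positive root of `t² = D t + 1`.
Rotations span a copy of `P(C_n)`, the identity is adjacent to every reflection and a
reflection to nothing else, so `xᵀ A x = t² n D + 2 n t = t · n (t² + 1) = t · xᵀ x`.
The largest eigenvalue of a symmetric matrix bounds every such Rayleigh quotient.
-/

open scoped Classical

noncomputable section

/-- The power graph of a (multiplicative) group: distinct `x, y` are adjacent iff one is
a natural-number power of the other. -/
def powerGraph (G : Type*) [Group G] : SimpleGraph G where
  Adj x y := x ≠ y ∧ ∃ m : ℕ, x = y ^ m ∨ y = x ^ m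
  symm := by
    constructor
    rintro x y ⟨hxy, m, hm⟩
    exact ⟨hxy.symm, m, hm.symm⟩
  loopless := by
    constructor
    rintro x ⟨hx, -⟩
    exact hx rfl

open Matrix

theorem Matrix.IsHermitian.dotProduct_mulVec_le_of_spectrum_le {ι : Type*} [Fintype ι]
    [DecidableEq ι] {A : Matrix ι ι ℝ} (hA : A.IsHermitian) {lam : ℝ}
    (hlam : ∀ μ ∈ spectrum ℝ A, μ ≤ lam) (x : ι → ℝ) : x ⬝ᵥ A *ᵥ x ≤ lam * (x ⬝ᵥ x) := by
  have hpsd : (algebraMap ℝ (Matrix ι ι ℝ) lam - A).PosSemidef := by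
    refine posSemidef_iff_isHermitian_and_spectrum_nonneg.2 ⟨?_, ?_⟩
    · exact (isHermitian_diagonal_of_self_adjoint _ (IsSelfAdjoint.all _)).sub hA
    · rw [← spectrum.singleton_sub_eq]
      rintro _ ⟨_, rfl, μ, hμ, rfl⟩
      simpa using hlam μ hμ
  have := hpsd.dotProduct_mulVec_nonneg x
  rw [star_trivial, sub_mulVec, dotProduct_sub, Algebra.algebraMap_eq_smul_one, smul_mulVec,
    one_mulVec, dotProduct_smul, smul_eq_mul] at this
  linarith

namespace DihedralGroup

variable {n : ℕ}

lemma sr_pow_eq_one_or_eq (i : ZMod n) (m : ℕ) : sr i ^ m = 1 ∨ sr i ^ m = sr i := by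
  induction m with
  | zero => exact .inl rfl
  | succ k ih => rcases ih with h | h <;> simp [pow_succ, h]

lemma sum_eq_sum_r_add_sum_sr [NeZero n] {M : Type*} [AddCommMonoid M]
    (f : DihedralGroup n → M) : ∑ g, f g = ∑ i, f (r i) + ∑ i, f (sr i) := by
  rw [← equivSum.symm.sum_comp, Fintype.sum_sum_type]
  rfl

lemma powerGraph_adj_r_r (i j : ZMod n) :
    (powerGraph (DihedralGroup n)).Adj (r i) (r j) ↔ (addPowerGraph (ZMod n)).Adj i j := by
  simp [powerGraph, addPowerGraph, nsmul_eq_mul, mul_comm]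

lemma powerGraph_adj_r_sr (i j : ZMod n) :
    (powerGraph (DihedralGroup n)).Adj (r i) (sr j) ↔ i = 0 := by
  refine ⟨?_, fun hi => ⟨nofun, 0, .inl (by rw [hi, pow_zero, r_zero])⟩⟩
  rintro ⟨-, m, h | h⟩
  · rcases sr_pow_eq_one_or_eq j m with h' | h' <;> rw [h'] at h
    · exact r.inj h
    · cases h
  · simp at h

lemma powerGraph_not_adj_sr_sr (i j : ZMod n) :
    ¬ (powerGraph (DihedralGroup n)).Adj (sr i) (sr j) := by
  rintro ⟨hne, m, h | h⟩ <;>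
  rcases sr_pow_eq_one_or_eq _ m with h' | h' <;> rw [h'] at h
  all_goals first | exact hne h | exact hne h.symm | cases h

def cosetVec (a b : ℝ) : DihedralGroup n → ℝ
  | r _ => a
  | sr _ => b

variable [NeZero n] (a b : ℝ)

lemma adjMatrix_mulVec_cosetVec_r (i : ZMod n) :
    ((powerGraph (DihedralGroup n)).adjMatrix ℝ *ᵥ cosetVec a b) (r i) =
      (addPowerGraph (ZMod n)).degree i * a + if i = 0 then n * b else 0 := by
  rw [mulVec, dotProduct, sum_eq_sum_r_add_sum_sr]
  simp only [SimpleGraph.adjMatrix_apply, powerGraph_adj_r_r, powerGraph_adj_r_sr, cosetVec,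
    ite_mul, one_mul, zero_mul]
  rw [← Finset.sum_filter, Finset.sum_const, ← SimpleGraph.neighborFinset_eq_filter]
  simp

lemma adjMatrix_mulVec_cosetVec_sr (i : ZMod n) :
    ((powerGraph (DihedralGroup n)).adjMatrix ℝ *ᵥ cosetVec a b) (sr i) = a := by
  simp [mulVec, dotProduct, sum_eq_sum_r_add_sum_sr, SimpleGraph.adjMatrix_apply,
    SimpleGraph.adj_comm _ (sr i), powerGraph_adj_r_sr, powerGraph_not_adj_sr_sr, cosetVec]

lemma cosetVec_dotProduct_adjMatrix_mulVec :
    cosetVec a b ⬝ᵥ (powerGraph (DihedralGroup n)).adjMatrix ℝ *ᵥ cosetVec a b =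
      a ^ 2 * ∑ i, ((addPowerGraph (ZMod n)).degree i : ℝ) + 2 * n * a * b := by
  rw [dotProduct, sum_eq_sum_r_add_sum_sr]
  simp only [adjMatrix_mulVec_cosetVec_r, adjMatrix_mulVec_cosetVec_sr]
  simp only [cosetVec, mul_add, mul_ite, mul_zero, Finset.sum_add_distrib, Finset.sum_ite_eq',
    Finset.mem_univ, if_true, Finset.sum_const, Finset.card_univ, ZMod.card, nsmul_eq_mul,
    Finset.mul_sum]
  ring_nf

lemma cosetVec_dotProduct_self :
    cosetVec a b ⬝ᵥ cosetVec (n := n) a b = n * (a ^ 2 + b ^ 2) := by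
  simp only [dotProduct, cosetVec, sum_eq_sum_r_add_sum_sr, Finset.sum_const, Finset.card_univ,
    ZMod.card, nsmul_eq_mul]
  ring

end DihedralGroup

open DihedralGroup in
theorem spectralRadius_powerGraph_dihedral_lower_bound_general
    (n : ℕ) [NeZero n] (lam Davg : ℝ)
    (hlam : IsGreatest (spectrum ℝ ((powerGraph (DihedralGroup n)).adjMatrix ℝ)) lam)
    (hDavg : Davg =
      (∑ v : ZMod n, ((addPowerGraph (ZMod n)).degree v : ℝ)) / (n : ℝ)) :
    (Davg + Real.sqrt (Davg ^ 2 + 4)) / 2 ≤ lam := by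
  set t := (Davg + Real.sqrt (Davg ^ 2 + 4)) / 2 with ht
  have ht_sq : t ^ 2 = Davg * t + 1 := by
    have := Real.sq_sqrt (show 0 ≤ Davg ^ 2 + 4 by positivity)
    rw [ht]
    linear_combination this / 4
  have hdeg : ∑ v : ZMod n, ((addPowerGraph (ZMod n)).degree v : ℝ) = Davg * n := by
    rw [hDavg, div_mul_cancel₀ _ (Nat.cast_ne_zero.2 (NeZero.ne n))]
  have hrayleigh := ((powerGraph (DihedralGroup n)).isHermitian_adjMatrix ℝ
    ).dotProduct_mulVec_le_of_spectrum_le (fun _ hμ => hlam.2 hμ) (cosetVec t 1)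
  rw [cosetVec_dotProduct_adjMatrix_mulVec, cosetVec_dotProduct_self, hdeg] at hrayleigh
  have hnorm_pos : (0 : ℝ) < n * (t ^ 2 + 1) := by
    have : (0 : ℝ) < n := Nat.cast_pos.2 (Nat.pos_of_ne_zero (NeZero.ne n))
    positivity
  refine le_of_mul_le_mul_left ?_ hnorm_pos
  linear_combination hrayleigh + n * t * ht_sq

/-- Spectral-radius lower bound for the power graph of the dihedral group of order `2n`,
in terms of the average degree of the power graph of `ZMod n`. -/
theorem spectralRadius_powerGraph_dihedral_lower_bound
    (n : ℕ) [NeZero n] (hn : 3 ≤ n) (lam Davg : ℝ)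
    (hlam : IsGreatest (spectrum ℝ ((powerGraph (DihedralGroup n)).adjMatrix ℝ)) lam)
    (hDavg : Davg =
      (∑ v : ZMod n, ((addPowerGraph (ZMod n)).degree v : ℝ)) / (n : ℝ)) :
    (Davg + Real.sqrt (Davg ^ 2 + 4)) / 2 ≤ lam :=
  spectralRadius_powerGraph_dihedral_lower_bound_general n lam Davg hlam hDavg
end
end

section
/- Let n ≥ 2. Then the spectral radius of the power graph of the dicyclic group of order 4n satisfies λ₁(P(Q_{4n})) ≤ 2n + 1. -/
open scoped Classical

noncomputable section

/-! If `λ` is an adjacency eigenvalue, then `λ²` is an eigenvalue of the nonnegative matrix `A²`,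
whose row sums are the neighbourhood sums `∑_{t ~ u} deg t`; Gershgorin's theorem bounds `λ²` by
the largest of them.

In the power graph of `Q₄ₙ = ⟨a, x⟩`, an element `xaⁱ` is adjacent only to `1`, `aⁿ` and `xaⁱ⁺ⁿ`,
and a power `aʲ` with `j ∉ {0, n}` only to other powers of `a`. Hence the degrees are at most
`4n - 1` at `1` and `aⁿ`, `2n - 1` at the other powers of `a` and `3` at the `xaⁱ`, and summing
these bounds over any neighbourhood gives at most `(2n + 1)²`, with equality at `1` and `aⁿ`. -/

open Finset

theorem Matrix.exists_le_sum_row_of_mem_spectrum_of_nonneg {ι : Type*} [Fintype ι]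
    [DecidableEq ι] {A : Matrix ι ι ℝ} (hA : ∀ i j, 0 ≤ A i j) {μ : ℝ}
    (hμ : μ ∈ spectrum ℝ A) : ∃ i, μ ≤ ∑ j, A i j := by
  rw [← Matrix.spectrum_toLin', ← Module.End.hasEigenvalue_iff_mem_spectrum] at hμ
  obtain ⟨i, hi⟩ := eigenvalue_mem_ball hμ
  refine ⟨i, ?_⟩
  rw [Metric.mem_closedBall, Real.dist_eq] at hi
  simp only [Real.norm_of_nonneg (hA _ _)] at hi
  rw [← add_sum_erase _ _ (mem_univ i)]
  linarith [le_abs_self (μ - A i i)]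

namespace SimpleGraph

variable {V : Type*} [Fintype V] [DecidableEq V] (G : SimpleGraph V) [DecidableRel G.Adj]

theorem sum_adjMatrix_sq_apply (u : V) :
    ∑ v, (G.adjMatrix ℝ ^ 2) u v = ∑ t ∈ G.neighborFinset u, (G.degree t : ℝ) := by
  simp only [sq, adjMatrix_mul_apply]
  rw [sum_comm]
  refine sum_congr rfl fun t _ => ?_
  simp [← card_neighborFinset_eq_degree, neighborFinset_eq_filter]

theorem exists_sq_le_sum_degree_of_mem_spectrum {μ : ℝ}
    (hμ : μ ∈ spectrum ℝ (G.adjMatrix ℝ)) :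
    ∃ u, μ ^ 2 ≤ ∑ t ∈ G.neighborFinset u, (G.degree t : ℝ) := by
  have hnonneg (u v : V) : 0 ≤ (G.adjMatrix ℝ ^ 2) u v := by
    rw [adjMatrix_pow_apply_eq_card_walk]
    positivity
  obtain ⟨u, hu⟩ := Matrix.exists_le_sum_row_of_mem_spectrum_of_nonneg hnonneg
    (spectrum.pow_mem_pow _ 2 hμ)
  exact ⟨u, hu.trans_eq (G.sum_adjMatrix_sq_apply u)⟩

end SimpleGraph

namespace ZMod

variable {n : ℕ}

theorem natCast_add_natCast_self_two_mul : (n : ZMod (2 * n)) + n = 0 := by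
  rw [← two_mul]
  exact_mod_cast natCast_self (2 * n)

theorem natCast_ne_zero_two_mul [NeZero n] : (n : ZMod (2 * n)) ≠ 0 := by
  rw [Ne, natCast_eq_zero_iff]
  intro h
  have := Nat.le_of_dvd (Nat.pos_of_neZero n) h
  have := Nat.pos_of_neZero n
  omega

end ZMod

namespace QuaternionGroup

open ZMod

variable {n : ℕ}

theorem a_pow (i : ZMod (2 * n)) (m : ℕ) : a i ^ m = a ((m : ZMod (2 * n)) * i) := by
  induction m with
  | zero => simp
  | succ m ih => rw [pow_succ, ih, a_mul_a]; push_cast; ring_nf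

theorem xa_pow_mem (i : ZMod (2 * n)) (m : ℕ) :
    xa i ^ m ∈ ({a 0, xa i, a n, xa (i + (n : ZMod (2 * n)))} : Finset (QuaternionGroup n)) := by
  rw [← Nat.mod_add_div m 4, pow_add, pow_mul, xa_pow_four, one_pow, mul_one]
  have : m % 4 < 4 := Nat.mod_lt _ (by norm_num)
  interval_cases m % 4 <;> simp [pow_succ]
  right; right
  linear_combination -(natCast_add_natCast_self_two_mul (n := n))

theorem sum_univ {M : Type*} [AddCommMonoid M] [NeZero n] (f : QuaternionGroup n → M) :
    ∑ t, f t = ∑ k, f (a k) + ∑ k, f (xa k) := by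
  let e : ZMod (2 * n) ⊕ ZMod (2 * n) ≃ QuaternionGroup n :=
    { toFun := Sum.elim a xa
      invFun := fun | a j => .inl j | xa j => .inr j
      left_inv := by rintro (j | j) <;> rfl
      right_inv := by rintro (j | j) <;> rfl }
  rw [← e.sum_comp, Fintype.sum_sum_type]
  rfl

theorem powerGraph_adj_a_xa {i j : ZMod (2 * n)}
    (h : (powerGraph (QuaternionGroup n)).Adj (a j) (xa i)) : j = 0 ∨ j = n := by
  obtain ⟨-, m, hm | hm⟩ := h
  · simpa [← hm, -a_zero] using xa_pow_mem i m
  · simp [a_pow] at hm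

theorem powerGraph_adj_xa_xa {i k : ZMod (2 * n)}
    (h : (powerGraph (QuaternionGroup n)).Adj (xa i) (xa k)) : k = i + n := by
  obtain ⟨hne, m, hm | hm⟩ := h
  · have := xa_pow_mem k m
    simp only [← hm, mem_insert, mem_singleton, reduceCtorEq, xa.injEq, false_or] at this
    rcases this with rfl | rfl
    · exact absurd rfl hne
    · linear_combination -(natCast_add_natCast_self_two_mul (n := n))
  · have := xa_pow_mem i m
    simp only [← hm, mem_insert, mem_singleton, reduceCtorEq, xa.injEq, false_or] at this
    exact this.resolve_left fun h => hne (congrArg xa h.symm)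

variable [NeZero n]

theorem neighborFinset_powerGraph_a_subset {j : ZMod (2 * n)} (hj : ¬(j = 0 ∨ j = n)) :
    (powerGraph (QuaternionGroup n)).neighborFinset (a j) ⊆ (univ.erase j).image a := by
  intro t ht
  rw [SimpleGraph.mem_neighborFinset] at ht
  cases t with
  | a k => simpa using fun hkj : k = j => ht.ne (congrArg a hkj.symm)
  | xa i => exact absurd (powerGraph_adj_a_xa ht) hj

theorem neighborFinset_powerGraph_xa_subset (i : ZMod (2 * n)) :
    (powerGraph (QuaternionGroup n)).neighborFinset (xa i) ⊆
      {a 0, a n, xa (i + (n : ZMod (2 * n)))} := by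
  intro t ht
  rw [SimpleGraph.mem_neighborFinset] at ht
  cases t with
  | a j => rcases powerGraph_adj_a_xa ht.symm with rfl | rfl <;> simp [-a_zero]
  | xa k => simp [powerGraph_adj_xa_xa ht]

variable (n) in
def powerGraphDegreeBound : QuaternionGroup n → ℝ
  | a j => if j = 0 ∨ j = n then 4 * n - 1 else 2 * n - 1
  | xa _ => 3

theorem powerGraphDegreeBound_nonneg (t : QuaternionGroup n) :
    0 ≤ powerGraphDegreeBound n t := by
  have : (1 : ℝ) ≤ n := by exact_mod_cast Nat.one_le_iff_ne_zero.2 (NeZero.ne n)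
  cases t with
  | a j => simp only [powerGraphDegreeBound]; split_ifs <;> linarith
  | xa i => norm_num [powerGraphDegreeBound]

theorem degree_powerGraph_le_powerGraphDegreeBound (t : QuaternionGroup n) :
    ((powerGraph (QuaternionGroup n)).degree t : ℝ) ≤ powerGraphDegreeBound n t := by
  rw [← SimpleGraph.card_neighborFinset_eq_degree]
  cases t with
  | a j =>
    simp only [powerGraphDegreeBound]
    split_ifs with hj
    · have hlt := (powerGraph (QuaternionGroup n)).degree_lt_card_verts (a j)
      rw [QuaternionGroup.card, ← SimpleGraph.card_neighborFinset_eq_degree] at hlt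
      have hle := (Nat.cast_le (α := ℝ)).2 (Nat.add_one_le_of_lt hlt)
      push_cast at hle
      linarith
    · have hsub := (card_le_card (neighborFinset_powerGraph_a_subset hj)).trans card_image_le
      have hcard := card_erase_add_one (mem_univ j)
      rw [card_univ, ZMod.card] at hcard
      have hle := (Nat.cast_le (α := ℝ)).2 ((Nat.add_le_add_right hsub 1).trans hcard.le)
      push_cast at hle
      linarith
  | xa i =>
    have hle := (card_le_card (neighborFinset_powerGraph_xa_subset i)).trans card_le_three
    simp only [powerGraphDegreeBound]
    exact_mod_cast hle

theorem sum_powerGraphDegreeBound_a :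
    ∑ k, powerGraphDegreeBound n (a k) = 4 * n ^ 2 + 2 * n := by
  have hspecial : #{k : ZMod (2 * n) | k = 0 ∨ k = n} = 2 := by
    rw [filter_or, filter_eq', filter_eq', if_pos (mem_univ _), if_pos (mem_univ _)]
    exact card_pair natCast_ne_zero_two_mul.symm
  have htotal := card_filter_add_card_filter_not (s := univ)
    (fun k : ZMod (2 * n) => k = 0 ∨ k = n)
  rw [card_univ, ZMod.card, hspecial] at htotal
  have : (#{k : ZMod (2 * n) | ¬(k = 0 ∨ k = n)} : ℝ) = 2 * n - 2 := by
    rw [eq_sub_iff_add_eq, add_comm]; exact_mod_cast htotal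
  simp only [powerGraphDegreeBound]
  rw [sum_ite, sum_const, sum_const, hspecial, nsmul_eq_mul, nsmul_eq_mul, this]
  ring

theorem sum_powerGraphDegreeBound :
    ∑ t, powerGraphDegreeBound n t = 4 * n ^ 2 + 8 * n := by
  rw [sum_univ, sum_powerGraphDegreeBound_a]
  simp only [powerGraphDegreeBound, sum_const, card_univ, ZMod.card, nsmul_eq_mul]
  push_cast
  ring

theorem sum_neighborFinset_powerGraphDegreeBound_le (u : QuaternionGroup n) :
    ∑ t ∈ (powerGraph (QuaternionGroup n)).neighborFinset u, powerGraphDegreeBound n t ≤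
      (2 * n + 1) ^ 2 := by
  have hn : (1 : ℝ) ≤ n := by exact_mod_cast Nat.one_le_iff_ne_zero.2 (NeZero.ne n)
  have hnonneg (s : Finset (QuaternionGroup n)) :
      ∀ t ∈ s, t ∉ (powerGraph (QuaternionGroup n)).neighborFinset u →
        0 ≤ powerGraphDegreeBound n t :=
    fun t _ _ => powerGraphDegreeBound_nonneg t
  cases u with
  | a j =>
    by_cases hj : j = 0 ∨ j = n
    · have hsub : (powerGraph (QuaternionGroup n)).neighborFinset (a j) ⊆ univ.erase (a j) :=
        fun t ht => mem_erase.2 ⟨(SimpleGraph.mem_neighborFinset _ _ _ |>.1 ht).ne', mem_univ _⟩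
      calc _ ≤ ∑ t ∈ univ.erase (a j), powerGraphDegreeBound n t :=
            sum_le_sum_of_subset_of_nonneg hsub (hnonneg _)
        _ = (2 * n + 1) ^ 2 := by
            rw [sum_erase_eq_sub (mem_univ _), sum_powerGraphDegreeBound]
            simp only [powerGraphDegreeBound, if_pos hj]
            ring
    · calc _ ≤ ∑ t ∈ (univ.erase j).image a, powerGraphDegreeBound n t :=
            sum_le_sum_of_subset_of_nonneg (neighborFinset_powerGraph_a_subset hj) (hnonneg _)
        _ = ∑ k ∈ univ.erase j, powerGraphDegreeBound n (a k) :=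
            sum_image fun _ _ _ _ h => a.inj h
        _ ≤ (2 * n + 1) ^ 2 := by
            rw [sum_erase_eq_sub (mem_univ _), sum_powerGraphDegreeBound_a]
            simp only [powerGraphDegreeBound, if_neg hj]
            nlinarith
  | xa i =>
    calc _ ≤ ∑ t ∈ {a 0, a n, xa (i + (n : ZMod (2 * n)))}, powerGraphDegreeBound n t :=
          sum_le_sum_of_subset_of_nonneg (neighborFinset_powerGraph_xa_subset i) (hnonneg _)
      _ = 2 * (4 * n - 1) + 3 := by
          rw [sum_insert (by simp [-a_zero, natCast_ne_zero_two_mul.symm]), sum_pair (by simp)]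
          simp [powerGraphDegreeBound, natCast_ne_zero_two_mul.symm]
          ring
      _ ≤ (2 * n + 1) ^ 2 := by nlinarith

end QuaternionGroup

theorem spectralRadius_powerGraph_dicyclic_upper_bound_general
    (n : ℕ) [NeZero n] (lam : ℝ)
    (hlam : IsGreatest (spectrum ℝ ((powerGraph (QuaternionGroup n)).adjMatrix ℝ)) lam) :
    lam ≤ 2 * (n : ℝ) + 1 := by
  obtain ⟨u, hu⟩ :=
    (powerGraph (QuaternionGroup n)).exists_sq_le_sum_degree_of_mem_spectrum hlam.1
  have hsq : lam ^ 2 ≤ (2 * n + 1) ^ 2 := calc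
    lam ^ 2 ≤ ∑ t ∈ (powerGraph (QuaternionGroup n)).neighborFinset u,
        QuaternionGroup.powerGraphDegreeBound n t :=
      hu.trans <| sum_le_sum fun t _ =>
        QuaternionGroup.degree_powerGraph_le_powerGraphDegreeBound t
    _ ≤ (2 * n + 1) ^ 2 := QuaternionGroup.sum_neighborFinset_powerGraphDegreeBound_le u
  exact (abs_le_of_sq_le_sq' hsq (by positivity)).2

/-- Spectral-radius upper bound for the power graph of the dicyclic group of order `4n`. -/
theorem spectralRadius_powerGraph_dicyclic_upper_bound
    (n : ℕ) [NeZero n] (hn : 2 ≤ n) (lam : ℝ)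
    (hlam : IsGreatest (spectrum ℝ ((powerGraph (QuaternionGroup n)).adjMatrix ℝ)) lam) :
    lam ≤ 2 * (n : ℝ) + 1 :=
  spectralRadius_powerGraph_dicyclic_upper_bound_general n lam hlam
end
end

section
/- Let p and q be distinct primes and let λ₁ be the spectral radius of the power graph P(Z_{pq}) of the cyclic group ZMod (p·q). Then λ₁ satisfies the cubic equation λ₁³ − (pq − 3)·λ₁² − (pq + p + q − 4)·λ₁ + (p²q² − 2p²q − 2pq² + p² + 5pq + q² − 4p − 4q + 4) = 0. -/
open scoped Classical

noncomputable section

/-!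
Via `ZMod (p * q) ≃ ZMod p × ZMod q`, split the group into three classes: zero together with
the generators, the elements of order `p`, and the elements of order `q`. Distinct elements
are adjacent unless one has order `p` and the other order `q`, so all vertices of a class have
the same closed neighbourhood. For an eigenvalue `λ ≠ -1` of the adjacency matrix `A`, the
equation `(A + 1) v = (λ + 1) v` then forces `v` to be constant on classes, so `λ + 1` is an
eigenvalue of the `3 × 3` quotient matrix of `A + 1`, whose characteristic polynomial gives the
cubic. The spectral radius is not `-1`: it is nonnegative because `trace A = 0`.
-/

open Finset Matrix

theorem Matrix.mem_spectrum_iff_exists_mulVec_eq_smul {n K : Type*} [Fintype n] [DecidableEq n]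
    [Field K] {A : Matrix n n K} {μ : K} : μ ∈ spectrum K A ↔ ∃ v ≠ 0, A *ᵥ v = μ • v := by
  rw [← spectrum_toLin', ← Module.End.hasEigenvalue_iff_mem_spectrum]
  constructor
  · intro h
    obtain ⟨v, hv⟩ := h.exists_hasEigenvector
    exact ⟨v, hv.2, by simpa using hv.apply_eq_smul⟩
  · rintro ⟨v, hv0, hv⟩
    exact Module.End.hasEigenvalue_of_hasEigenvector
      ⟨Module.End.mem_eigenspace_iff.2 (by simpa using hv), hv0⟩

theorem Matrix.cubic_of_mem_spectrum_fin_three {a b c μ : ℝ}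
    (h : μ ∈ spectrum ℝ !![a, b, c; a, b, 0; a, 0, c]) :
    μ ^ 3 - (a + b + c) * μ ^ 2 + b * c * μ + a * b * c = 0 := by
  rw [mem_spectrum_iff_isRoot_charpoly, Polynomial.IsRoot, eval_charpoly, det_fin_three] at h
  simp at h
  linear_combination h

namespace SimpleGraph

variable {V : Type*} [Fintype V] [DecidableEq V]

theorem exists_nonneg_mem_spectrum_adjMatrix [Nonempty V] (G : SimpleGraph V)
    [DecidableRel G.Adj] : ∃ μ ∈ spectrum ℝ (G.adjMatrix ℝ), 0 ≤ μ := by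
  have hA := G.isHermitian_adjMatrix (R := ℝ)
  have hsum : ∑ i, hA.eigenvalues i = 0 := by
    simpa using hA.trace_eq_sum_eigenvalues.symm.trans (G.trace_adjMatrix (α := ℝ))
  obtain ⟨i, -, hi⟩ := exists_le_of_sum_le (f := fun _ => (0 : ℝ)) (g := hA.eigenvalues)
    univ_nonempty (by simp [hsum])
  exact ⟨_, hA.eigenvalues_mem_spectrum_real i, hi⟩

/-- The quotient matrix of `A + 1` for the partition of `V` into the fibres of `f`, when
distinct `x, y` are adjacent iff `R (f x) (f y)` and `R` is reflexive. -/
def closedQuotientMatrix {κ : Type*} [Fintype κ] [DecidableEq κ] (f : V → κ)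
    (R : κ → κ → Prop) [DecidableRel R] : Matrix κ κ ℝ :=
  of fun i j => if R i j then (#{x | f x = j} : ℝ) else 0

variable {G : SimpleGraph V} [DecidableRel G.Adj] {κ : Type*} {f : V → κ}
  {R : κ → κ → Prop} [DecidableRel R]

theorem adjMatrix_mulVec_add_self (hadj : ∀ x y, G.Adj x y ↔ x ≠ y ∧ R (f x) (f y))
    (hR : ∀ i, R i i) (v : V → ℝ) (x : V) :
    (G.adjMatrix ℝ *ᵥ v) x + v x = ∑ z with R (f x) (f z), v z := by
  have : G.neighborFinset x = ({z | R (f x) (f z)} : Finset V).erase x := by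
    ext z; simp [hadj, ne_comm]
  rw [adjMatrix_mulVec_apply, this, sum_erase_add _ _ (by simpa using hR (f x))]

theorem add_one_mem_spectrum_closedQuotientMatrix [Fintype κ] [DecidableEq κ]
    (hadj : ∀ x y, G.Adj x y ↔ x ≠ y ∧ R (f x) (f y)) (hR : ∀ i, R i i) {μ : ℝ}
    (hμ : μ ∈ spectrum ℝ (G.adjMatrix ℝ)) (hμ1 : μ ≠ -1) :
    μ + 1 ∈ spectrum ℝ (closedQuotientMatrix f R) := by
  obtain ⟨v, hv0, hv⟩ := mem_spectrum_iff_exists_mulVec_eq_smul.1 hμ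
  have hμ1' : μ + 1 ≠ 0 := by contrapose! hμ1; linarith
  set w : κ → ℝ := fun i => (μ + 1)⁻¹ * ∑ z with R i (f z), v z
  have hvw (x : V) : v x = w (f x) := by
    simp only [w, ← adjMatrix_mulVec_add_self hadj hR, hv, Pi.smul_apply, smul_eq_mul,
      ← add_one_mul, inv_mul_cancel_left₀ hμ1']
  refine mem_spectrum_iff_exists_mulVec_eq_smul.2 ⟨w, ?_, funext fun i => ?_⟩
  · contrapose! hv0
    funext x
    simp [hvw, hv0]
  · calc (closedQuotientMatrix f R *ᵥ w) i
        = ∑ j with R i j, ∑ x with f x = j, w j := by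
          simp [closedQuotientMatrix, mulVec, dotProduct, sum_filter, ite_mul]
      _ = ∑ z with R i (f z), v z := by
          rw [sum_fiberwise_eq_sum_filter']
          simp [hvw]
      _ = ((μ + 1) • w) i := by simp [w, hμ1']

end SimpleGraph

theorem ZMod.exists_nsmul_eq_iff {p : ℕ} [Fact p.Prime] (a b : ZMod p) :
    (∃ m : ℕ, a = m • b) ↔ (b = 0 → a = 0) := by
  refine ⟨by rintro ⟨m, rfl⟩ rfl; simp, fun h => ?_⟩
  by_cases hb : b = 0
  · exact ⟨0, by simp [h hb]⟩
  · exact ⟨(a / b).val, by rw [nsmul_eq_mul, ZMod.natCast_zmod_val, div_mul_cancel₀ _ hb]⟩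

theorem ZMod.exists_nsmul_eq_prod_iff {m n : ℕ} (h : m.Coprime n) (u z : ZMod m × ZMod n) :
    (∃ k : ℕ, u = k • z) ↔ (∃ k : ℕ, u.1 = k • z.1) ∧ (∃ k : ℕ, u.2 = k • z.2) := by
  refine ⟨by rintro ⟨k, rfl⟩; exact ⟨⟨k, rfl⟩, ⟨k, rfl⟩⟩, ?_⟩
  rintro ⟨⟨k₁, h₁⟩, ⟨k₂, h₂⟩⟩
  obtain ⟨k, hk₁, hk₂⟩ := Nat.chineseRemainder h k₁ k₂
  refine ⟨k, Prod.ext ?_ ?_⟩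
  · rw [h₁, Prod.smul_fst, nsmul_eq_mul, nsmul_eq_mul, (ZMod.natCast_eq_natCast_iff _ _ _).2 hk₁]
  · rw [h₂, Prod.smul_snd, nsmul_eq_mul, nsmul_eq_mul, (ZMod.natCast_eq_natCast_iff _ _ _).2 hk₂]

namespace ZMod

variable {p q : ℕ}

/-- Class `0`: zero and the generators; class `1`: order `p`; class `2`: order `q`. -/
def pqClass (u : ZMod p × ZMod q) : Fin 3 :=
  if u.1 ≠ 0 ∧ u.2 = 0 then 1 else if u.1 = 0 ∧ u.2 ≠ 0 then 2 else 0

def pqClassRel (i j : Fin 3) : Prop := i = 0 ∨ j = 0 ∨ i = j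

section Prime

variable [Fact p.Prime] [Fact q.Prime]

theorem exists_nsmul_eq_or_iff_pqClassRel (hco : p.Coprime q) (u z : ZMod p × ZMod q) :
    (∃ m : ℕ, u = m • z ∨ z = m • u) ↔ pqClassRel (pqClass u) (pqClass z) := by
  rw [exists_or, exists_nsmul_eq_prod_iff hco, exists_nsmul_eq_prod_iff hco]
  simp only [exists_nsmul_eq_iff, pqClass, pqClassRel]
  by_cases h1 : u.1 = 0 <;> by_cases h2 : u.2 = 0 <;>
    by_cases h3 : z.1 = 0 <;> by_cases h4 : z.2 = 0 <;> simp [h1, h2, h3, h4]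

theorem addPowerGraph_adj_iff_pqClassRel (hco : p.Coprime q) (x y : ZMod (p * q)) :
    (addPowerGraph (ZMod (p * q))).Adj x y ↔
      x ≠ y ∧ pqClassRel (pqClass (chineseRemainder hco x)) (pqClass (chineseRemainder hco y)) := by
  rw [← exists_nsmul_eq_or_iff_pqClassRel hco]
  simp only [addPowerGraph, ← map_nsmul, (chineseRemainder hco).injective.eq_iff]

end Prime

variable [NeZero p] [NeZero q]

theorem card_pqClass_eq_one : #{u : ZMod p × ZMod q | pqClass u = 1} = p - 1 := by
  have : ({u | pqClass u = 1} : Finset (ZMod p × ZMod q)) = (univ.erase 0) ×ˢ {0} := by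
    ext ⟨a, b⟩
    by_cases ha : a = 0 <;> by_cases hb : b = 0 <;> simp [pqClass, ha, hb, eq_comm]
  rw [this, card_product, card_erase_of_mem (mem_univ _), card_univ, ZMod.card, card_singleton,
    mul_one]

theorem card_pqClass_eq_two : #{u : ZMod p × ZMod q | pqClass u = 2} = q - 1 := by
  have : ({u | pqClass u = 2} : Finset (ZMod p × ZMod q)) = {0} ×ˢ (univ.erase 0) := by
    ext ⟨a, b⟩
    by_cases ha : a = 0 <;> by_cases hb : b = 0 <;> simp [pqClass, ha, hb, eq_comm]
  rw [this, card_product, card_erase_of_mem (mem_univ _), card_univ, ZMod.card, card_singleton,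
    one_mul]

theorem card_pqClass_eq_zero :
    #{u : ZMod p × ZMod q | pqClass u = 0} + (p - 1) + (q - 1) = p * q := by
  rw [← card_pqClass_eq_one (q := q), ← card_pqClass_eq_two (p := p)]
  simpa [Fin.sum_univ_three] using
    (card_eq_sum_card_fiberwise (s := univ) (t := univ) (f := pqClass (p := p) (q := q))
      (by simp)).symm

theorem closedQuotientMatrix_pqClass (hco : p.Coprime q) :
    SimpleGraph.closedQuotientMatrix (fun x => pqClass (chineseRemainder hco x)) pqClassRel =
      !![(p * q - p - q + 2 : ℝ), p - 1, q - 1; p * q - p - q + 2, p - 1, 0;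
        p * q - p - q + 2, 0, q - 1] := by
  have hcard (j : Fin 3) : #{x | pqClass (chineseRemainder hco x) = j} =
      #{u : ZMod p × ZMod q | pqClass u = j} :=
    card_equiv (chineseRemainder hco).toEquiv (by simp)
  have h₁ : (#{u : ZMod p × ZMod q | pqClass u = 1} : ℝ) = p - 1 := by
    rw [card_pqClass_eq_one, Nat.cast_pred (NeZero.pos p)]
  have h₂ : (#{u : ZMod p × ZMod q | pqClass u = 2} : ℝ) = q - 1 := by
    rw [card_pqClass_eq_two, Nat.cast_pred (NeZero.pos q)]
  have h₀ : (#{u : ZMod p × ZMod q | pqClass u = 0} : ℝ) = p * q - p - q + 2 := by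
    have := congrArg (Nat.cast (R := ℝ)) (card_pqClass_eq_zero (p := p) (q := q))
    push_cast [Nat.cast_pred (NeZero.pos p), Nat.cast_pred (NeZero.pos q)] at this
    linarith
  ext i j
  fin_cases i <;> fin_cases j <;>
    simp [SimpleGraph.closedQuotientMatrix, pqClassRel, hcard, h₀, h₁, h₂]

end ZMod

open ZMod SimpleGraph in
/-- The spectral radius of the power graph of `ZMod (p * q)` (`p, q` distinct primes)
is a root of the stated cubic. -/
theorem spectralRadius_powerGraph_zmod_pq_cubic
    (p q : ℕ) [Fact p.Prime] [Fact q.Prime] (hpq : p ≠ q) (lam : ℝ)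
    (hlam : IsGreatest (spectrum ℝ ((addPowerGraph (ZMod (p * q))).adjMatrix ℝ)) lam) :
    lam ^ 3 - ((p : ℝ) * q - 3) * lam ^ 2 - ((p : ℝ) * q + p + q - 4) * lam +
      ((p : ℝ) ^ 2 * q ^ 2 - 2 * p ^ 2 * q - 2 * p * q ^ 2 + p ^ 2 + 5 * p * q + q ^ 2
        - 4 * p - 4 * q + 4) = 0 := by
  have hco : p.Coprime q := (Nat.coprime_primes Fact.out Fact.out).2 hpq
  have hlam1 : lam ≠ -1 := by
    obtain ⟨μ, hμ, hμ0⟩ := exists_nonneg_mem_spectrum_adjMatrix (addPowerGraph (ZMod (p * q)))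
    linarith [hlam.2 hμ]
  have hquot := add_one_mem_spectrum_closedQuotientMatrix
    (addPowerGraph_adj_iff_pqClassRel hco) (by simp [pqClassRel]) hlam.1 hlam1
  rw [closedQuotientMatrix_pqClass hco] at hquot
  linear_combination cubic_of_mem_spectrum_fin_three hquot
end
end

section
/- Let n ≥ 3 and let T_max = max_{v ∈ ZMod n} Tr(v) be the maximum transmission of the power graph P(C_n) of the cyclic group ZMod n. Then the distance spectral radius of the power graph of the dihedral group of order 2n satisfies ρ₁(P(D_{2n})) ≤ ((T_max + 2n − 2) + √((T_max − 2n + 2)² + 8n(2n − 1))) / 2. -/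
open scoped Classical

noncomputable section

/-- The distance matrix of a graph on a finite vertex set. -/
def distMatrix {V : Type*} [Fintype V] (G : SimpleGraph V) : Matrix V V ℝ :=
  fun x y => (G.dist x y : ℝ)

/-- The transmission of a vertex: the sum of the distances to all vertices. -/
def transmission {V : Type*} [Fintype V] (G : SimpleGraph V) (v : V) : ℕ :=
  ∑ w, G.dist v w

/-!
Split `D_{2n}` into the rotations `r i` and the reflections `sr i`. The identity is adjacent to
every vertex, so all distances are at most `2`; `r` embeds `P(C_n)` into `P(D_{2n})`, and
`sr i` is adjacent to `r 0 = 1`. Hence the four blocks of the distance matrix have row sums at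
most `Tmax`, `2n`, `2n - 1` and `2n - 2`. If `x` is an eigenvector for `ρ` and `M`, `N` are the
largest moduli of its rotation and reflection entries, evaluating the eigen-equation at those
entries gives `ρ M ≤ Tmax M + 2n N` and `ρ N ≤ (2n - 1) M + (2n - 2) N`, so `ρ` is at most the
Perron root of the quotient matrix `!![Tmax, 2n; 2n - 1, 2n - 2]`.
-/

open SimpleGraph DihedralGroup

/-- The larger eigenvalue of the matrix `!![a, b; c, d]` when `0 ≤ b * c`. -/
def perronRoot₂ (a b c d : ℝ) : ℝ :=
  (a + d + √((a - d) ^ 2 + 4 * b * c)) / 2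

theorem le_perronRoot₂_of_mul_le {a b c d ρ : ℝ} (h : (ρ - a) * (ρ - d) ≤ b * c) :
    ρ ≤ perronRoot₂ a b c d := by
  have hsq : (2 * ρ - a - d) ^ 2 ≤ (a - d) ^ 2 + 4 * b * c := by nlinarith
  have := (le_abs_self _).trans (Real.abs_le_sqrt hsq)
  unfold perronRoot₂
  linarith

theorem le_perronRoot₂_of_subinvariant {a b c d ρ M N : ℝ} (hb : 0 ≤ b) (hc : 0 ≤ c)
    (hM : 0 ≤ M) (hN : 0 ≤ N) (hMN : M ≠ 0 ∨ N ≠ 0)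
    (h₁ : ρ * M ≤ a * M + b * N) (h₂ : ρ * N ≤ c * M + d * N) :
    ρ ≤ perronRoot₂ a b c d := by
  rcases le_or_gt ρ a with ha | ha
  · exact ha.trans (le_perronRoot₂_of_mul_le (by simpa using mul_nonneg hb hc))
  rcases le_or_gt ρ d with hd | hd
  · exact hd.trans (le_perronRoot₂_of_mul_le (by simpa using mul_nonneg hb hc))
  have hM' : 0 < M := by
    refine hM.lt_of_ne' fun hM0 => ?_
    have : N ≤ 0 := by nlinarith
    exact hMN.elim (· hM0) (· (le_antisymm this hN))
  have hN' : 0 < N := by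
    refine hN.lt_of_ne' fun hN0 => ?_
    nlinarith
  refine le_perronRoot₂_of_mul_le (le_of_mul_le_mul_right ?_ (mul_pos hM' hN'))
  calc (ρ - a) * (ρ - d) * (M * N) = ((ρ - a) * M) * ((ρ - d) * N) := by ring
    _ ≤ (b * N) * (c * M) := by
      apply mul_le_mul <;> nlinarith
    _ = b * c * (M * N) := by ring

namespace Matrix

variable {ι : Type*} [Fintype ι]

theorem exists_mulVec_eq_smul_of_mem_spectrum [DecidableEq ι] {K : Type*} [Field K]
    {A : Matrix ι ι K} {μ : K} (h : μ ∈ spectrum K A) : ∃ x : ι → K, x ≠ 0 ∧ A *ᵥ x = μ • x := by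
  rw [← spectrum_toLin'] at h
  obtain ⟨x, hx⟩ := (Module.End.HasEigenvalue.of_mem_spectrum h).exists_hasEigenvector
  exact ⟨x, hx.2, hx.apply_eq_smul⟩

theorem mul_abs_le_sum_mul_abs_of_mulVec_eq_smul {A : Matrix ι ι ℝ} (hA : ∀ i j, 0 ≤ A i j)
    {x : ι → ℝ} {ρ : ℝ} (hx : A *ᵥ x = ρ • x) (i : ι) :
    ρ * |x i| ≤ ∑ j, A i j * |x j| :=
  calc ρ * |x i| ≤ |ρ * x i| := by rw [abs_mul]; gcongr; exact le_abs_self ρ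
    _ = |∑ j, A i j * x j| := by rw [← smul_eq_mul, ← Pi.smul_apply, ← hx]; rfl
    _ ≤ ∑ j, |A i j * x j| := Finset.abs_sum_le_sum_abs _ _
    _ = ∑ j, A i j * |x j| := by simp_rw [abs_mul, abs_of_nonneg (hA i _)]

theorem le_perronRoot₂_of_mem_spectrum {α β : Type*} [Fintype α] [Fintype β] [DecidableEq α]
    [DecidableEq β] [Nonempty α] [Nonempty β] {A : Matrix (α ⊕ β) (α ⊕ β) ℝ}
    (hA : ∀ i j, 0 ≤ A i j) {a b c d ρ : ℝ} (hb : 0 ≤ b) (hc : 0 ≤ c)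
    (hαα : ∀ i, ∑ j, A (.inl i) (.inl j) ≤ a) (hαβ : ∀ i, ∑ j, A (.inl i) (.inr j) ≤ b)
    (hβα : ∀ i, ∑ j, A (.inr i) (.inl j) ≤ c) (hββ : ∀ i, ∑ j, A (.inr i) (.inr j) ≤ d)
    (hρ : ρ ∈ spectrum ℝ A) : ρ ≤ perronRoot₂ a b c d := by
  obtain ⟨x, hx0, hx⟩ := exists_mulVec_eq_smul_of_mem_spectrum hρ
  obtain ⟨i₀, hi₀⟩ := Finite.exists_max fun i => |x (.inl i)|
  obtain ⟨j₀, hj₀⟩ := Finite.exists_max fun j => |x (.inr j)|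
  set M := |x (.inl i₀)|
  set N := |x (.inr j₀)|
  have hrow (v : α ⊕ β) {p q : ℝ} (hp : ∑ i, A v (.inl i) ≤ p) (hq : ∑ j, A v (.inr j) ≤ q) :
      ρ * |x v| ≤ p * M + q * N :=
    calc ρ * |x v| ≤ ∑ w, A v w * |x w| := mul_abs_le_sum_mul_abs_of_mulVec_eq_smul hA hx v
      _ = ∑ i, A v (.inl i) * |x (.inl i)| + ∑ j, A v (.inr j) * |x (.inr j)| :=
        Fintype.sum_sum_type _
      _ ≤ (∑ i, A v (.inl i)) * M + (∑ j, A v (.inr j)) * N := by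
        rw [Finset.sum_mul, Finset.sum_mul]
        gcongr with i _ j _
        exacts [hA _ _, hi₀ i, hA _ _, hj₀ j]
      _ ≤ p * M + q * N := by gcongr
  refine le_perronRoot₂_of_subinvariant hb hc (abs_nonneg _) (abs_nonneg _) ?_
    (hrow _ (hαα i₀) (hαβ i₀)) (hrow _ (hβα j₀) (hββ j₀))
  obtain ⟨v | v, hv⟩ := Function.ne_iff.mp hx0
  · exact .inl ((abs_pos.mpr hv).trans_le (hi₀ v)).ne'
  · exact .inr ((abs_pos.mpr hv).trans_le (hj₀ v)).ne'

end Matrix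

namespace SimpleGraph

variable {V W : Type*} {G : SimpleGraph V}

theorem dist_le_two_of_forall_adj {c : V} (hc : ∀ v, c ≠ v → G.Adj c v) (u v : V) :
    G.dist u v ≤ 2 := by
  have hecc : G.eccent c ≤ 1 := (eccent_le_one_iff c).mpr hc
  have : G.edist u v ≤ 2 :=
    calc G.edist u v ≤ G.ediam := edist_le_ediam
      _ ≤ 2 * G.eccent c := ediam_le_two_mul_eccent c
      _ ≤ 2 * 1 := by gcongr
      _ = 2 := mul_one 2
  exact ENat.toNat_le_of_le_natCast this

theorem connected_of_forall_adj [Nonempty V] {c : V} (hc : ∀ v, c ≠ v → G.Adj c v) :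
    G.Connected := by
  refine (connected_iff_exists_forall_reachable G).mpr ⟨c, fun v => ?_⟩
  by_cases h : c = v
  · exact h ▸ Reachable.refl c
  · exact (hc v h).reachable

theorem Reachable.dist_map_le {G' : SimpleGraph W} (f : G →g G') {u v : V}
    (h : G.Reachable u v) : G'.dist (f u) (f v) ≤ G.dist u v := by
  obtain ⟨p, hp⟩ := h.exists_walk_length_eq_dist
  exact hp ▸ p.length_map f ▸ dist_le (p.map f)

end SimpleGraph

theorem powerGraph_adj_one {G : Type*} [Group G] {x : G} (hx : 1 ≠ x) :
    (powerGraph G).Adj 1 x :=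
  ⟨hx, 0, .inl (pow_zero x).symm⟩

theorem addPowerGraph_adj_zero {G : Type*} [AddGroup G] {x : G} (hx : 0 ≠ x) :
    (addPowerGraph G).Adj 0 x :=
  ⟨hx, 0, .inl (zero_nsmul x).symm⟩

theorem powerGraph_dist_le_two {G : Type*} [Group G] (x y : G) : (powerGraph G).dist x y ≤ 2 :=
  dist_le_two_of_forall_adj (fun _ => powerGraph_adj_one) x y

theorem Fintype.sum_le_add_card_sub_one_mul {ι : Type*} [Fintype ι] {f : ι → ℝ} {c : ℝ}
    (hf : ∀ j, f j ≤ c) (k : ι) : ∑ j, f j ≤ f k + (Fintype.card ι - 1) * c := by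
  rw [← Finset.add_sum_erase _ _ (Finset.mem_univ k)]
  gcongr
  calc ∑ j ∈ Finset.univ.erase k, f j ≤ (Finset.univ.erase k).card • c :=
        Finset.sum_le_card_nsmul _ _ _ fun j _ => hf j
    _ = (Fintype.card ι - 1) * c := by
        rw [Finset.card_erase_of_mem (Finset.mem_univ k), nsmul_eq_mul, Finset.card_univ,
          Nat.cast_pred (Fintype.card_pos_iff.mpr ⟨k⟩)]

namespace DihedralGroup

variable {n : ℕ}

def rotationPowerGraphHom (n : ℕ) : addPowerGraph (ZMod n) →g powerGraph (DihedralGroup n) where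
  toFun := r
  map_rel' := by
    rintro i j ⟨hij, m, hm⟩
    refine ⟨fun h => hij (r.inj h), m, ?_⟩
    simp only [r_pow, r.injEq, ← nsmul_eq_mul']
    exact hm

theorem dist_r_r_le (i j : ZMod n) :
    (powerGraph (DihedralGroup n)).dist (r i) (r j) ≤ (addPowerGraph (ZMod n)).dist i j :=
  ((connected_of_forall_adj fun _ => addPowerGraph_adj_zero).preconnected i j).dist_map_le
    (rotationPowerGraphHom n)

variable [NeZero n]

theorem sum_dist_r_r_le (i : ZMod n) :
    ∑ j, ((powerGraph (DihedralGroup n)).dist (r i) (r j) : ℝ) ≤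
      ((Finset.univ.sup (transmission (addPowerGraph (ZMod n))) : ℕ) : ℝ) := by
  rw [← Nat.cast_sum]
  exact_mod_cast (Finset.sum_le_sum fun j _ => dist_r_r_le i j).trans
    (Finset.le_sup (f := transmission _) (Finset.mem_univ i))

theorem sum_dist_r_sr_le (i : ZMod n) :
    ∑ j, ((powerGraph (DihedralGroup n)).dist (r i) (sr j) : ℝ) ≤ 2 * n := by
  calc _ ≤ Fintype.card (ZMod n) • (2 : ℝ) :=
        Finset.sum_le_card_nsmul _ _ _ fun _ _ => mod_cast powerGraph_dist_le_two _ _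
    _ = 2 * n := by rw [ZMod.card, nsmul_eq_mul, mul_comm]

theorem sum_dist_sr_r_le (i : ZMod n) :
    ∑ j, ((powerGraph (DihedralGroup n)).dist (sr i) (r j) : ℝ) ≤ 2 * n - 1 := by
  have hadj : (powerGraph (DihedralGroup n)).dist (sr i) (r 0) = 1 := by
    rw [dist_comm, r_zero, dist_eq_one_iff_adj]
    exact powerGraph_adj_one (by rw [one_def]; nofun)
  have := Fintype.sum_le_add_card_sub_one_mul
    (f := fun j => ((powerGraph (DihedralGroup n)).dist (sr i) (r j) : ℝ)) (c := 2)
    (fun j => mod_cast powerGraph_dist_le_two _ _) (0 : ZMod n)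
  rw [hadj, Nat.cast_one, ZMod.card] at this
  linarith

theorem sum_dist_sr_sr_le (i : ZMod n) :
    ∑ j, ((powerGraph (DihedralGroup n)).dist (sr i) (sr j) : ℝ) ≤ 2 * n - 2 := by
  have := Fintype.sum_le_add_card_sub_one_mul
    (f := fun j => ((powerGraph (DihedralGroup n)).dist (sr i) (sr j) : ℝ)) (c := 2)
    (fun j => mod_cast powerGraph_dist_le_two _ _) i
  rw [dist_self, Nat.cast_zero, ZMod.card] at this
  linarith

end DihedralGroup

theorem distSpectralRadius_powerGraph_dihedral_upper_bound_general
    (n : ℕ) [NeZero n] (rho Tmax : ℝ)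
    (hrho : IsGreatest (spectrum ℝ (distMatrix (powerGraph (DihedralGroup n)))) rho)
    (hTmax : Tmax =
      ((Finset.univ.sup (transmission (addPowerGraph (ZMod n))) : ℕ) : ℝ)) :
    rho ≤ ((Tmax + 2 * n - 2) +
      Real.sqrt ((Tmax - 2 * n + 2) ^ 2 + 8 * n * (2 * (n : ℝ) - 1))) / 2 := by
  set A := Matrix.reindexAlgEquiv ℝ ℝ equivSum (distMatrix (powerGraph (DihedralGroup n)))
  have hspec : rho ∈ spectrum ℝ A := by
    rw [AlgEquiv.spectrum_eq]
    exact hrho.1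
  have hn : (1 : ℝ) ≤ n := mod_cast NeZero.one_le
  calc rho ≤ perronRoot₂ Tmax (2 * n) (2 * n - 1) (2 * n - 2) :=
        Matrix.le_perronRoot₂_of_mem_spectrum (A := A) (fun _ _ => Nat.cast_nonneg _)
          (by positivity) (by linarith) (hTmax ▸ sum_dist_r_r_le) sum_dist_r_sr_le
          sum_dist_sr_r_le sum_dist_sr_sr_le hspec
    _ = _ := by rw [perronRoot₂]; ring_nf

/-- Distance-spectral-radius upper bound for the power graph of the dihedral group of
order `2n`, in terms of the maximum transmission of the power graph of `ZMod n`. -/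
theorem distSpectralRadius_powerGraph_dihedral_upper_bound
    (n : ℕ) [NeZero n] (hn : 3 ≤ n) (rho Tmax : ℝ)
    (hrho : IsGreatest (spectrum ℝ (distMatrix (powerGraph (DihedralGroup n)))) rho)
    (hTmax : Tmax =
      ((Finset.univ.sup (transmission (addPowerGraph (ZMod n))) : ℕ) : ℝ)) :
    rho ≤ ((Tmax + 2 * n - 2) +
      Real.sqrt ((Tmax - 2 * n + 2) ^ 2 + 8 * n * (2 * (n : ℝ) - 1))) / 2 :=
  distSpectralRadius_powerGraph_dihedral_upper_bound_general n rho Tmax hrho hTmax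
end
end
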